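/- Let K/k be a finite Galois extension with Galois group Γ, and let (β_a, μ(a,b)) be a descent datum on a K-linear abelian category C such that each β_a is exact and additive. Then the category C^Γ of descent objects (x, {a_x}) is abelian, and the forgetful functor C^Γ → C is exact. -/

import Mathlib

/-!
Since each `β_a` is exact, the limit in `C` of a finite diagram of descent objects carries
structure isomorphisms, namely the comparison isomorphisms `lim X_j ≅ lim β_a X_j ≅ β_a (lim X_j)`,
and these make it the limit in `C^Γ`; dually for colimits. So the forgetful functor `C^Γ → C`
creates finite limits and colimits. It is moreover additive and reflects isomorphisms, hence it
carries the coimage-image comparison of a morphism of `C^Γ` to that of its image in `C`, which is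
an isomorphism because `C` is abelian.
-/

open CategoryTheory CategoryTheory.Limits

universe v u

section

variable (Γ : Type*) [Group Γ] (C : Type u) [Category.{v} C]

/-- A descent datum on a category `C` for a group `Γ`: equivalences `β_a` together with
natural isomorphisms `μ(a,b) : β_{ab} ≅ β_a β_b` satisfying the cocycle coherence
condition. -/
structure DescentDatum where
  β : Γ → C ⥤ C
  μ : ∀ a b : Γ, β (a * b) ≅ β b ⋙ β a
  coh : ∀ (a b c : Γ) (x : C),
    (μ (a * b) c).hom.app x ≫ (μ a b).hom.app ((β c).obj x) =
      eqToHom (by rw [mul_assoc]) ≫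
        (μ a (b * c)).hom.app x ≫ (β a).map ((μ b c).hom.app x)

variable {Γ C}

/-- Descent objects: `x ∈ C` with isomorphisms `a_x : x ≅ β_a x` compatible with `μ`. -/
structure DescentObj (D : DescentDatum Γ C) where
  pt : C
  iso : ∀ a : Γ, pt ≅ (D.β a).obj pt
  compat : ∀ a b : Γ,
    (iso (a * b)).hom ≫ (D.μ a b).hom.app pt = (iso a).hom ≫ (D.β a).map (iso b).hom

/-- Morphisms of descent objects: morphisms in `C` commuting with the structure
isomorphisms. -/
instance {D : DescentDatum Γ C} : Category (DescentObj D) where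
  Hom X Y := {f : X.pt ⟶ Y.pt // ∀ a : Γ, f ≫ (Y.iso a).hom = (X.iso a).hom ≫ (D.β a).map f}
  id X := ⟨𝟙 X.pt, fun a => by simp⟩
  comp f g := ⟨f.1 ≫ g.1, fun a => by
    rw [Category.assoc, g.2 a, ← Category.assoc, f.2 a, Category.assoc,
      ← Functor.map_comp]⟩
  id_comp f := by apply Subtype.ext; simp
  comp_id f := by apply Subtype.ext; simp
  assoc f g h := by apply Subtype.ext; simp

/-- The forgetful functor `C^Γ → C`. -/
def forgetDescent (D : DescentDatum Γ C) : DescentObj D ⥤ C where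
  obj X := X.pt
  map f := f.1

namespace CategoryTheory.Abelian

theorem isIso_coimageImageComparison_of_reflectsIsomorphisms {A B : Type*} [Category A]
    [Category B] [Preadditive A] [HasFiniteLimits A] [HasFiniteColimits A] [Abelian B]
    (F : A ⥤ B) [F.PreservesZeroMorphisms] [PreservesFiniteLimits F]
    [PreservesFiniteColimits F] [F.ReflectsIsomorphisms] {X Y : A} (f : X ⟶ Y) :
    IsIso (coimageImageComparison f) :=
  have := IsIso.of_isIso_fac_right (PreservesCoimage.hom_coimageImageComparison F f).symm
  isIso_of_reflects_iso _ F

noncomputable abbrev ofReflectsIsomorphisms {A B : Type*} [Category A] [Category B]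
    [Preadditive A] [HasFiniteLimits A] [HasFiniteColimits A] [Abelian B] (F : A ⥤ B)
    [F.PreservesZeroMorphisms] [PreservesFiniteLimits F] [PreservesFiniteColimits F]
    [F.ReflectsIsomorphisms] : Abelian A :=
  have : ∀ {X Y : A} (f : X ⟶ Y), IsIso (coimageImageComparison f) :=
    isIso_coimageImageComparison_of_reflectsIsomorphisms F
  ofCoimageImageComparisonIsIso

end CategoryTheory.Abelian

namespace DescentObj

variable {D : DescentDatum Γ C}

@[ext]
theorem hom_ext {X Y : DescentObj D} {f g : X ⟶ Y} (h : f.1 = g.1) : f = g :=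
  Subtype.ext h

@[simp]
theorem id_val (X : DescentObj D) : (𝟙 X : X ⟶ X).1 = 𝟙 X.pt :=
  rfl

@[simp]
theorem comp_val {X Y Z : DescentObj D} (f : X ⟶ Y) (g : Y ⟶ Z) : (f ≫ g).1 = f.1 ≫ g.1 :=
  rfl

instance : (forgetDescent D).ReflectsIsomorphisms where
  reflects {X Y} f (hf : IsIso f.1) := by
    refine ⟨⟨⟨inv f.1, fun a => ?_⟩, by ext; simp, by ext; simp⟩⟩
    rw [IsIso.inv_comp_eq, ← Category.assoc, f.2 a, Category.assoc, ← Functor.map_comp,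
      IsIso.hom_inv_id, CategoryTheory.Functor.map_id, Category.comp_id]

section Preadditive

variable [Preadditive C] [∀ a, (D.β a).Additive]

def homAddSubgroup (X Y : DescentObj D) : AddSubgroup (X.pt ⟶ Y.pt) where
  carrier := {f | ∀ a, f ≫ (Y.iso a).hom = (X.iso a).hom ≫ (D.β a).map f}
  add_mem' hf hg a := by
    rw [Preadditive.add_comp, hf a, hg a, Functor.map_add, Preadditive.comp_add]
  zero_mem' a := by simp
  neg_mem' hf a := by
    rw [Preadditive.neg_comp, hf a, Functor.map_neg, Preadditive.comp_neg]

instance : Preadditive (DescentObj D) where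
  homGroup X Y := inferInstanceAs (AddCommGroup (homAddSubgroup X Y))
  add_comp _ _ _ f f' g := hom_ext (Preadditive.add_comp _ _ _ f.1 f'.1 g.1)
  comp_add _ _ _ f g g' := hom_ext (Preadditive.comp_add _ _ _ f.1 g.1 g'.1)

instance : (forgetDescent D).Additive where

end Preadditive

variable {J : Type*} [Category J] (K : J ⥤ DescentObj D)

def diagramIso (a : Γ) : K ⋙ forgetDescent D ≅ (K ⋙ forgetDescent D) ⋙ D.β a :=
  NatIso.ofComponents (fun j => (K.obj j).iso a) (fun f => (K.map f).2 a)

/- A (co)limit cone stays one after applying `β_a β_b`, so its legs are jointly monic (epic) there: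
the next four lemmas check the cocycle condition and the morphism condition of a lifted (co)limit
leg by leg. -/
theorem compat_comp_map_map_of_intertwining {x : C} (e : ∀ a, x ≅ (D.β a).obj x)
    {X : DescentObj D} (p : x ⟶ X.pt)
    (hp : ∀ a, (e a).hom ≫ (D.β a).map p = p ≫ (X.iso a).hom) (a b : Γ) :
    ((e (a * b)).hom ≫ (D.μ a b).hom.app x) ≫ (D.β a).map ((D.β b).map p) =
      ((e a).hom ≫ (D.β a).map (e b).hom) ≫ (D.β a).map ((D.β b).map p) := by
  have hμ : (D.μ a b).hom.app x ≫ (D.β a).map ((D.β b).map p) =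
      (D.β (a * b)).map p ≫ (D.μ a b).hom.app X.pt :=
    ((D.μ a b).hom.naturality p).symm
  calc _ = p ≫ (X.iso (a * b)).hom ≫ (D.μ a b).hom.app X.pt := by
          rw [Category.assoc, hμ, ← Category.assoc, hp, Category.assoc]
    _ = p ≫ (X.iso a).hom ≫ (D.β a).map (X.iso b).hom := by rw [X.compat]
    _ = _ := by
          rw [Category.assoc, ← Functor.map_comp, hp, Functor.map_comp, ← Category.assoc, ← hp,
            Category.assoc]

theorem hom_comm_comp_map_of_intertwining {X Y : DescentObj D} {y : C}
    (e : ∀ a, y ≅ (D.β a).obj y) (f : X.pt ⟶ y) (p : y ⟶ Y.pt)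
    (hp : ∀ a, (e a).hom ≫ (D.β a).map p = p ≫ (Y.iso a).hom)
    (q : X ⟶ Y) (hq : f ≫ p = q.1) (a : Γ) :
    (f ≫ (e a).hom) ≫ (D.β a).map p = ((X.iso a).hom ≫ (D.β a).map f) ≫ (D.β a).map p := by
  rw [Category.assoc, hp, ← Category.assoc, hq, q.2 a, ← hq, Functor.map_comp, Category.assoc]

theorem comp_compat_of_intertwining {x : C} (e : ∀ a, x ≅ (D.β a).obj x)
    {X : DescentObj D} (p : X.pt ⟶ x)
    (hp : ∀ a, p ≫ (e a).hom = (X.iso a).hom ≫ (D.β a).map p) (a b : Γ) :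
    p ≫ (e (a * b)).hom ≫ (D.μ a b).hom.app x = p ≫ (e a).hom ≫ (D.β a).map (e b).hom := by
  have hμ : (D.β (a * b)).map p ≫ (D.μ a b).hom.app x =
      (D.μ a b).hom.app X.pt ≫ (D.β a).map ((D.β b).map p) :=
    (D.μ a b).hom.naturality p
  calc _ = ((X.iso a).hom ≫ (D.β a).map (X.iso b).hom) ≫ (D.β a).map ((D.β b).map p) := by
          rw [← Category.assoc, hp, Category.assoc, hμ, ← Category.assoc, ← X.compat]
    _ = _ := by
          rw [Category.assoc, ← Functor.map_comp, ← hp, Functor.map_comp, ← Category.assoc, ← hp,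
            Category.assoc]

theorem comp_hom_comm_of_intertwining {X Y : DescentObj D} {y : C}
    (e : ∀ a, y ≅ (D.β a).obj y) (p : X.pt ⟶ y) (f : y ⟶ Y.pt)
    (hp : ∀ a, p ≫ (e a).hom = (X.iso a).hom ≫ (D.β a).map p)
    (q : X ⟶ Y) (hq : p ≫ f = q.1) (a : Γ) :
    p ≫ f ≫ (Y.iso a).hom = p ≫ (e a).hom ≫ (D.β a).map f := by
  rw [← Category.assoc, hq, q.2 a, ← hq, Functor.map_comp, ← Category.assoc, ← hp,
    Category.assoc]

section Limits

variable [∀ a, PreservesLimitsOfShape J (D.β a)] {K} {c : Cone (K ⋙ forgetDescent D)}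
  (hc : IsLimit c)

noncomputable def limitIso (a : Γ) : c.pt ≅ (D.β a).obj c.pt :=
  hc.conePointsIsoOfNatIso (isLimitOfPreserves (D.β a) hc) (diagramIso K a)

theorem limitIso_hom_map_π (a : Γ) (j : J) :
    (limitIso hc a).hom ≫ (D.β a).map (c.π.app j) = c.π.app j ≫ ((K.obj j).iso a).hom :=
  hc.conePointsIsoOfNatIso_hom_comp _ _ j

noncomputable def liftedLimit : DescentObj D where
  pt := c.pt
  iso := limitIso hc
  compat a b := (isLimitOfPreserves (D.β a) (isLimitOfPreserves (D.β b) hc)).hom_ext fun j =>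
    compat_comp_map_map_of_intertwining (limitIso hc) (c.π.app j) (limitIso_hom_map_π hc · j) a b

noncomputable def liftedLimitCone : Cone K where
  pt := liftedLimit hc
  π.app j := ⟨c.π.app j, fun a => (limitIso_hom_map_π hc a j).symm⟩
  π.naturality _ _ f := hom_ext (c.π.naturality f)

noncomputable def liftedLimitConeIsLimit : IsLimit (liftedLimitCone hc) where
  lift s := ⟨hc.lift ((forgetDescent D).mapCone s), fun a =>
    (isLimitOfPreserves (D.β a) hc).hom_ext fun j =>
      hom_comm_comp_map_of_intertwining (limitIso hc) _ (c.π.app j)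
        (limitIso_hom_map_π hc · j) (s.π.app j) (hc.fac _ j) a⟩
  fac _ j := hom_ext (hc.fac _ j)
  uniq s m hm :=
    hom_ext (hc.uniq ((forgetDescent D).mapCone s) m.1 fun j => congrArg Subtype.val (hm j))

noncomputable def liftsToLimit : LiftsToLimit K (forgetDescent D) c hc where
  liftedCone := liftedLimitCone hc
  validLift := Iso.refl _
  makesLimit := liftedLimitConeIsLimit hc

noncomputable instance : CreatesLimitsOfShape J (forgetDescent D) where
  CreatesLimit := createsLimitOfReflectsIso fun _ hc => liftsToLimit hc

end Limits

section Colimits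

variable [∀ a, PreservesColimitsOfShape J (D.β a)] {K} {c : Cocone (K ⋙ forgetDescent D)}
  (hc : IsColimit c)

noncomputable def colimitIso (a : Γ) : c.pt ≅ (D.β a).obj c.pt :=
  hc.coconePointsIsoOfNatIso (isColimitOfPreserves (D.β a) hc) (diagramIso K a)

theorem ι_colimitIso_hom (a : Γ) (j : J) :
    c.ι.app j ≫ (colimitIso hc a).hom = ((K.obj j).iso a).hom ≫ (D.β a).map (c.ι.app j) :=
  hc.comp_coconePointsIsoOfNatIso_hom _ _ j

noncomputable def liftedColimit : DescentObj D where
  pt := c.pt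
  iso := colimitIso hc
  compat a b := hc.hom_ext fun j =>
    comp_compat_of_intertwining (colimitIso hc) (c.ι.app j) (ι_colimitIso_hom hc · j) a b

noncomputable def liftedColimitCocone : Cocone K where
  pt := liftedColimit hc
  ι.app j := ⟨c.ι.app j, (ι_colimitIso_hom hc · j)⟩
  ι.naturality _ _ f := hom_ext (c.ι.naturality f)

noncomputable def liftedColimitCoconeIsColimit : IsColimit (liftedColimitCocone hc) where
  desc s := ⟨hc.desc ((forgetDescent D).mapCocone s), fun a =>
    hc.hom_ext fun j =>
      comp_hom_comm_of_intertwining (colimitIso hc) (c.ι.app j) _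
        (ι_colimitIso_hom hc · j) (s.ι.app j) (hc.fac _ j) a⟩
  fac _ j := hom_ext (hc.fac _ j)
  uniq s m hm :=
    hom_ext (hc.uniq ((forgetDescent D).mapCocone s) m.1 fun j => congrArg Subtype.val (hm j))

noncomputable def liftsToColimit : LiftsToColimit K (forgetDescent D) c hc where
  liftedCocone := liftedColimitCocone hc
  validLift := Iso.refl _
  makesColimit := liftedColimitCoconeIsColimit hc

noncomputable instance : CreatesColimitsOfShape J (forgetDescent D) where
  CreatesColimit := createsColimitOfReflectsIso fun _ hc => liftsToColimit hc

end Colimits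

noncomputable instance [∀ a, PreservesFiniteLimits (D.β a)] :
    CreatesFiniteLimits (forgetDescent D) where
  createsFiniteLimits _ _ _ := inferInstance

noncomputable instance [∀ a, PreservesFiniteColimits (D.β a)] :
    CreatesFiniteColimits (forgetDescent D) where
  createsFiniteColimits _ _ _ := inferInstance

instance [HasFiniteLimits C] [∀ a, PreservesFiniteLimits (D.β a)] :
    HasFiniteLimits (DescentObj D) :=
  hasFiniteLimits_of_hasLimitsLimits_of_createsFiniteLimits (forgetDescent D)

instance [HasFiniteColimits C] [∀ a, PreservesFiniteColimits (D.β a)] :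
    HasFiniteColimits (DescentObj D) :=
  hasFiniteColimits_of_hasColimits_of_createsFiniteColimits (forgetDescent D)

noncomputable instance [Abelian C] [∀ a, (D.β a).Additive] [∀ a, PreservesFiniteLimits (D.β a)]
    [∀ a, PreservesFiniteColimits (D.β a)] : Abelian (DescentObj D) :=
  Abelian.ofReflectsIsomorphisms (forgetDescent D)

end DescentObj

theorem descent_category_abelian_general (k K : Type*) [Field k] [Field K] [Algebra k K]
    (C : Type u) [Category.{v} C] [Abelian C]
    (D : DescentDatum (K ≃ₐ[k] K) C)
    (hadd : ∀ a, (D.β a).Additive)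
    (hexact : ∀ a, Nonempty (PreservesFiniteLimits (D.β a)) ∧
      Nonempty (PreservesFiniteColimits (D.β a))) :
    Nonempty (Abelian (DescentObj D)) ∧
      Nonempty (PreservesFiniteLimits (forgetDescent D)) ∧
      Nonempty (PreservesFiniteColimits (forgetDescent D)) := by
  have := hadd
  have := fun a => (hexact a).1.some
  have := fun a => (hexact a).2.some
  exact ⟨⟨inferInstance⟩, ⟨inferInstance⟩, ⟨inferInstance⟩⟩

/-- for a finite Galois extension `K/k` with Galois group `Γ` and a descent
datum `(β_a, μ(a,b))` on a `K`-linear abelian category `C` (each `β_a` additive, exact, and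
`a`-semilinear on morphisms), the category `C^Γ` of descent objects is abelian and the
forgetful functor `C^Γ → C` is exact. -/
theorem descent_category_abelian (k K : Type*) [Field k] [Field K] [Algebra k K]
    [IsGalois k K] [FiniteDimensional k K]
    (C : Type u) [Category.{v} C] [Abelian C] [CategoryTheory.Linear K C]
    (D : DescentDatum (K ≃ₐ[k] K) C)
    (hadd : ∀ a, (D.β a).Additive)
    (hexact : ∀ a, Nonempty (PreservesFiniteLimits (D.β a)) ∧
      Nonempty (PreservesFiniteColimits (D.β a)))
    (hequiv : ∀ a, (D.β a).IsEquivalence)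
    (hsemi : ∀ (a : K ≃ₐ[k] K) (x y : C) (f : x ⟶ y) (lam : K),
      (D.β a).map (lam • f) = (a lam) • (D.β a).map f) :
    Nonempty (Abelian (DescentObj D)) ∧
      Nonempty (PreservesFiniteLimits (forgetDescent D)) ∧
      Nonempty (PreservesFiniteColimits (forgetDescent D)) :=
  descent_category_abelian_general k K C D hadd hexact

end
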